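/- arXiv:1711.05309 — 2 statements merged into one kernel-verified Lean document; each statement's English description precedes it below -/
import Mathlib

section
/- Let I be an ideal in a polynomial ring R over a field K with a fixed monomial order, and let G be a Gröbner basis of I. Let B be the set of standard monomials of I (monomials not in the initial ideal of I), enumerated as x^{α_1}, x^{α_2}, …. Let g ∈ R and suppose that for each i, x^{α_i}·g ≡ h_i (mod G) with h_i a K-linear combination of monomials in B. Suppose further that by downward row operations (subtracting a scalar multiple of an earlier row from a later row) the system (x^{α_i})·g ≡ (h_i) (mod G) is transformed into (u_i)·g ≡ (v_i) (mod G), where the nonzero v_i have pairwise distinct leading monomials. Then G ∪ {v_i : v_i ≠ 0} is a Gröbner basis of the ideal (I, g). -/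
open MvPolynomial
open scoped MonomialOrder

noncomputable section
namespace Paper

variable {σ K : Type*} [Field K]

/-- The leading exponent (multidegree) of a polynomial w.r.t. a monomial order. -/
def mdeg (m : MonomialOrder σ) (f : MvPolynomial σ K) : σ →₀ ℕ :=
  m.toSyn.symm (f.support.sup fun α => m.toSyn α)

/-- The initial ideal of `I` w.r.t. the monomial order `m`. -/
def initialIdeal (m : MonomialOrder σ) (I : Ideal (MvPolynomial σ K)) :
    Ideal (MvPolynomial σ K) :=
  Ideal.span ((fun f => (monomial (mdeg m f) (1 : K))) '' {f | f ∈ I ∧ f ≠ 0})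

/-- `α` is a standard monomial of `I`: the monomial `x^α` is not in the initial ideal. -/
def IsStdMonomial (m : MonomialOrder σ) (I : Ideal (MvPolynomial σ K)) (α : σ →₀ ℕ) : Prop :=
  (monomial α (1 : K)) ∉ initialIdeal m I

/-- `G` is a Gröbner basis of `I` w.r.t. `m`. -/
def IsGroebnerBasis (m : MonomialOrder σ) (I : Ideal (MvPolynomial σ K))
    (G : Set (MvPolynomial σ K)) : Prop :=
  (∀ g ∈ G, g ∈ I ∧ g ≠ 0) ∧
  initialIdeal m I = Ideal.span ((fun f => (monomial (mdeg m f) (1 : K))) '' G)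

/-- An ideal is homogeneous if it is generated by homogeneous polynomials. -/
def IsHomogeneousIdeal (I : Ideal (MvPolynomial σ K)) : Prop :=
  ∃ S : Set (MvPolynomial σ K), (∀ f ∈ S, ∃ k, f.IsHomogeneous k) ∧ I = Ideal.span S

/-- The graded reverse lexicographic order on `Fin N →₀ ℕ`, with
`x_0 > x_1 > ⋯ > x_{N-1}`: compare total degrees first; for equal total degrees,
`α ≺ β` iff the last coordinate in which they differ is larger in `α`. -/
def IsGrevlex {N : ℕ} (m : MonomialOrder (Fin N)) : Prop :=
  ∀ α β : Fin N →₀ ℕ, (α ≺[m] β) ↔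
    (α.degree < β.degree ∨
      (α.degree = β.degree ∧ ∃ j, β j < α j ∧ ∀ k, j < k → α k = β k))

/-- A family of polynomials is generic (over the subfield `F`) if each member is
homogeneous of the prescribed degree and the collection of all of their coefficients
is algebraically independent over `F`. -/
def IsGenericFamily (F : Subfield K) {ι : Type*} (d : ι → ℕ)
    (f : ι → MvPolynomial σ K) : Prop :=
  (∀ i, (f i).IsHomogeneous (d i)) ∧
  AlgebraicIndependent F
    (fun p : (Σ i : ι, {α : σ →₀ ℕ // α.degree = d i}) => coeff p.2.1 (f p.1))

/-- A monomial ideal property: `J` is almost reverse lexicographic if for every minimal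
monomial generator `x^α` of `J`, every monomial of the same degree which is larger
in the order `m` also belongs to `J`. -/
def IsAlmostRevLex (m : MonomialOrder σ) (J : Ideal (MvPolynomial σ K)) : Prop :=
  ∀ α : σ →₀ ℕ, (monomial α (1 : K)) ∈ J →
    (∀ β, β ≤ α → β ≠ α → (monomial β (1 : K)) ∉ J) →
    ∀ γ : σ →₀ ℕ, γ.degree = α.degree → (α ≺[m] γ) → (monomial γ (1 : K)) ∈ J

/-- The map `K[x_1,…,x_n,z] → K[x_1,…,x_n]` sending `z` to `0`. -/
def projZ (n : ℕ) (K : Type*) [Field K] :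
    MvPolynomial (Fin (n+1)) K →ₐ[K] MvPolynomial (Fin n) K :=
  MvPolynomial.aeval (Fin.lastCases (motive := fun _ => MvPolynomial (Fin n) K) 0 X)

/-- Embedding of exponents from `n` variables into `n+1` variables. -/
def emb (n : ℕ) : (Fin n →₀ ℕ) → (Fin (n+1) →₀ ℕ) :=
  Finsupp.mapDomain Fin.castSucc

/-!
Write `f ∈ (I, g)` as `p + q g` with `p ∈ I`, and reduce `q` modulo `G` to a combination of
standard monomials `x^{α_i}`; since `x^{α_i} g ≡ h_i (mod I)`, this gives `f = P + w` with
`P ∈ I` and `w` in the `K`-span of the `h_i`, which is also the span of the `v_i` because the row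
operations are invertible. The polynomial `w` involves only standard monomials, so the leading
terms of `P` and `w` cannot cancel: the leading monomial of `f` is either that of `P`, hence in
`in(I)`, or that of `w`, and the leading monomial of a nonzero combination of the `v_i` is the
leading monomial of one of them because theirs are pairwise distinct.
-/

section LowerTriangular

variable {R M : Type*}

lemma finsum_smul_mem_span_range [Semiring R] [AddCommMonoid M] [Module R M] {ι : Type*}
    (c : ι → R) (h : ι → M) : ∑ᶠ j, c j • h j ∈ Submodule.span R (Set.range h) :=
  finsum_induction (· ∈ Submodule.span R (Set.range h)) (Submodule.zero_mem _)
    (fun _ _ => Submodule.add_mem _)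
    (fun j => Submodule.smul_mem _ _ (Submodule.subset_span ⟨j, rfl⟩))

variable [DivisionRing R] [AddCommGroup M] [Module R M] {U : ℕ → ℕ → R} {h v : ℕ → M}

lemma finsum_eq_sum_range_of_lowerTriangular (hU : ∀ i j, i < j → U i j = 0) (i : ℕ) :
    ∑ᶠ j, U i j • h j = ∑ j ∈ Finset.range (i + 1), U i j • h j := by
  refine finsum_eq_sum_of_support_subset _ fun j hj => ?_
  by_contra hji
  exact hj (by simp only [hU i j (by simpa using hji), zero_smul])

lemma mem_span_range_of_lowerTriangular (hU : ∀ i j, i < j → U i j = 0)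
    (hUdiag : ∀ i, U i i ≠ 0) (hv : ∀ i, v i = ∑ᶠ j, U i j • h j) (j : ℕ) :
    h j ∈ Submodule.span R (Set.range v) := by
  induction j using Nat.strong_induction_on with
  | _ j ih =>
  have hvj : v j = ∑ k ∈ Finset.range j, U j k • h k + U j j • h j := by
    rw [hv, finsum_eq_sum_range_of_lowerTriangular hU, Finset.sum_range_succ]
  have hhj : h j = (U j j)⁻¹ • (v j - ∑ k ∈ Finset.range j, U j k • h k) := by
    rw [hvj, add_sub_cancel_left, smul_smul, inv_mul_cancel₀ (hUdiag j), one_smul]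
  rw [hhj]
  refine Submodule.smul_mem _ _ (Submodule.sub_mem _ (Submodule.subset_span ⟨j, rfl⟩)
    (Submodule.sum_mem _ fun k hk => Submodule.smul_mem _ _ (ih k (Finset.mem_range.mp hk))))

lemma span_range_eq_of_lowerTriangular (hU : ∀ i j, i < j → U i j = 0)
    (hUdiag : ∀ i, U i i ≠ 0) (hv : ∀ i, v i = ∑ᶠ j, U i j • h j) :
    Submodule.span R (Set.range v) = Submodule.span R (Set.range h) := by
  apply le_antisymm <;> rw [Submodule.span_le, Set.range_subset_iff] <;> intro i
  · rw [hv]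
    exact finsum_smul_mem_span_range _ _
  · exact mem_span_range_of_lowerTriangular hU hUdiag hv i

end LowerTriangular

section DistinctDegrees

variable {R ι : Type*} [CommSemiring R] [NoZeroDivisors R] (m : MonomialOrder σ)
  {v : ι → MvPolynomial σ R}

lemma sum_smul_eq_zero_or_exists_degree_eq [DecidableEq ι]
    (hv : ∀ i j, i ≠ j → v i ≠ 0 → v j ≠ 0 → m.degree (v i) ≠ m.degree (v j))
    (c : ι → R) (s : Finset ι) :
    ∑ i ∈ s, c i • v i = 0 ∨
      ∃ i ∈ s, v i ≠ 0 ∧ m.degree (∑ i ∈ s, c i • v i) = m.degree (v i) := by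
  induction s using Finset.induction_on_max_value (fun i => m.toSyn (m.degree (v i))) with
  | empty => simp
  | insert a s ha hmax ih =>
    rw [Finset.sum_insert ha]
    by_cases hca : c a • v a = 0
    · rw [hca, zero_add]
      exact ih.imp_right fun ⟨i, hi, hvi⟩ => ⟨i, Finset.mem_insert_of_mem hi, hvi⟩
    have hva : v a ≠ 0 := right_ne_zero_of_smul hca
    have hdega : m.degree (c a • v a) = m.degree (v a) :=
      m.degree_smul_of_mem_nonZeroDivisors
        (mem_nonZeroDivisors_of_ne_zero (left_ne_zero_of_smul hca))
    right
    refine ⟨a, Finset.mem_insert_self a s, hva, ?_⟩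
    rcases ih with hs | ⟨i, hi, hvi, hdeg⟩
    · rw [hs, add_zero, hdega]
    · have hlt : m.degree (∑ i ∈ s, c i • v i) ≺[m] m.degree (c a • v a) := by
        rw [hdeg, hdega]
        exact (hmax i hi).lt_of_ne fun h => hv i a (by rintro rfl; exact ha hi) hvi hva
          (m.toSyn.injective h)
      rw [m.degree_add_of_lt hlt, hdega]

lemma exists_degree_eq_of_mem_span
    (hv : ∀ i j, i ≠ j → v i ≠ 0 → v j ≠ 0 → m.degree (v i) ≠ m.degree (v j))
    {w : MvPolynomial σ R} (hw : w ∈ Submodule.span R (Set.range v)) (hw0 : w ≠ 0) :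
    ∃ i, v i ≠ 0 ∧ m.degree w = m.degree (v i) := by
  classical
  obtain ⟨c, rfl⟩ := Finsupp.mem_span_range_iff_exists_finsupp.mp hw
  obtain ⟨i, -, hi⟩ := (sum_smul_eq_zero_or_exists_degree_eq m hv c c.support).resolve_left hw0
  exact ⟨i, hi⟩

end DistinctDegrees

section Groebner

variable {m : MonomialOrder σ} {I : Ideal (MvPolynomial σ K)} {G : Set (MvPolynomial σ K)}

lemma IsGroebnerBasis.monomial_mem_initialIdeal_iff (hG : IsGroebnerBasis m I G)
    (β : σ →₀ ℕ) :
    monomial β (1 : K) ∈ initialIdeal m I ↔ ∃ b ∈ G, m.degree b ≤ β := by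
  classical
  rw [hG.2, ← Set.image_image (fun s => monomial s (1 : K)), mem_ideal_span_monomial_image]
  simp [support_monomial, mdeg, MonomialOrder.degree]

lemma IsGroebnerBasis.exists_sub_mem_restrictSupport (hG : IsGroebnerBasis m I G)
    (q : MvPolynomial σ K) :
    ∃ r ∈ restrictSupport K {β | IsStdMonomial m I β}, q - r ∈ I := by
  obtain ⟨c, r, hqr, -, hr⟩ := m.div_set
    (fun b hb => isUnit_iff_ne_zero.mpr (m.leadingCoeff_ne_zero_iff.mpr (hG.1 b hb).2)) q
  refine ⟨r, fun β hβ => ?_, ?_⟩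
  · rw [Set.mem_ofPred_eq, IsStdMonomial, hG.monomial_mem_initialIdeal_iff]
    exact fun ⟨b, hb, hbβ⟩ => hr β hβ b hb hbβ
  · rw [hqr, add_sub_cancel_right]
    exact Ideal.span_le.mpr (fun b hb => (hG.1 b hb).1)
      ((Finsupp.mem_span_iff_linearCombination _ _ _).mpr ⟨c, rfl⟩)

lemma degree_add_eq_of_mem_of_mem_restrictSupport {P w : MvPolynomial σ K} (hP : P ∈ I)
    (hw : w ∈ restrictSupport K {β | IsStdMonomial m I β}) (hPw : P + w ≠ 0) :
    (P ≠ 0 ∧ m.degree (P + w) = m.degree P) ∨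
      (w ≠ 0 ∧ m.degree (P + w) = m.degree w) := by
  by_cases hP0 : P = 0
  · exact Or.inr ⟨by simpa [hP0] using hPw, by rw [hP0, zero_add]⟩
  by_cases hw0 : w = 0
  · exact Or.inl ⟨hP0, by rw [hw0, add_zero]⟩
  -- `x ^ degree P` lies in the initial ideal, while `degree w` is a standard exponent.
  have hne : m.toSyn (m.degree P) ≠ m.toSyn (m.degree w) := fun h =>
    hw (m.degree_mem_support hw0)
      (m.toSyn.injective h ▸ Ideal.subset_span ⟨P, ⟨hP, hP0⟩, rfl⟩)
  rcases hne.lt_or_gt with hlt | hlt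
  · exact Or.inr ⟨hw0, by rw [add_comm, m.degree_add_of_lt hlt]⟩
  · exact Or.inl ⟨hP0, m.degree_add_of_lt hlt⟩

lemma isGroebnerBasis_of_monomial_degree_mem {J : Ideal (MvPolynomial σ K)}
    (hG : ∀ b ∈ G, b ∈ J ∧ b ≠ 0)
    (hdeg : ∀ f ∈ J, f ≠ 0 →
      monomial (m.degree f) (1 : K) ∈ Ideal.span ((fun b => monomial (mdeg m b) (1 : K)) '' G)) :
    IsGroebnerBasis m J G := by
  refine ⟨hG, le_antisymm ?_ (Ideal.span_mono (Set.image_mono fun b hb => hG b hb))⟩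
  rw [initialIdeal, Ideal.span_le]
  rintro _ ⟨f, ⟨hfJ, hf0⟩, rfl⟩
  exact hdeg f hfJ hf0

lemma restrictScalars_sup_span_singleton_le (hG : IsGroebnerBasis m I G) {g : MvPolynomial σ K}
    {α : ℕ → (σ →₀ ℕ)} (hα : ∀ β, IsStdMonomial m I β → ∃ i, α i = β)
    {h : ℕ → MvPolynomial σ K} (hmod : ∀ i, monomial (α i) (1 : K) * g - h i ∈ I) :
    (I ⊔ Ideal.span {g}).restrictScalars K ≤
      I.restrictScalars K ⊔ Submodule.span K (Set.range h) := by
  have hstd : restrictSupport K {β | IsStdMonomial m I β} ≤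
      (I.restrictScalars K ⊔ Submodule.span K (Set.range h)).comap (LinearMap.mulRight K g) := by
    rw [restrictSupport_eq_span, Submodule.span_le]
    rintro _ ⟨β, hβ, rfl⟩
    obtain ⟨i, rfl⟩ := hα β hβ
    rw [SetLike.mem_coe, Submodule.mem_comap, LinearMap.mulRight_apply, ← sub_add_cancel
      (monomial (α i) 1 * g) (h i)]
    exact Submodule.add_mem_sup (hmod i) (Submodule.subset_span ⟨i, rfl⟩)
  intro f hf
  obtain ⟨p, hp, _, hs, rfl⟩ := Submodule.mem_sup.mp hf
  obtain ⟨q, rfl⟩ := Ideal.mem_span_singleton'.mp hs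
  obtain ⟨r, hr, hqr⟩ := hG.exists_sub_mem_restrictSupport q
  have hpq : p + (q - r) * g ∈ I.restrictScalars K ⊔ Submodule.span K (Set.range h) :=
    Submodule.mem_sup_left (I.add_mem hp (I.mul_mem_right g hqr))
  convert Submodule.add_mem _ hpq (hstd hr) using 1
  simp only [LinearMap.mulRight_apply]
  ring

end Groebner

theorem groebner_basis_of_row_reduction_general
    {σ K : Type*} [Field K] (m : MonomialOrder σ)
    (I : Ideal (MvPolynomial σ K)) (G : Set (MvPolynomial σ K))
    (hG : IsGroebnerBasis m I G)
    (g : MvPolynomial σ K)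
    (α : ℕ → (σ →₀ ℕ))
    (hαrange : ∀ β, IsStdMonomial m I β ↔ ∃ i, α i = β)
    (h : ℕ → MvPolynomial σ K)
    (hmod : ∀ i, (monomial (α i) (1 : K)) * g - h i ∈ I)
    (hred : ∀ i, ∀ β ∈ (h i).support, IsStdMonomial m I β)
    (U : ℕ → ℕ → K)
    (hUtri : ∀ i j, i < j → U i j = 0)
    (hUdiag : ∀ i, U i i ≠ 0)
    (v : ℕ → MvPolynomial σ K)
    (hv : ∀ i, v i = ∑ᶠ j, U i j • h j)
    (hlead : ∀ i j, i ≠ j → v i ≠ 0 → v j ≠ 0 → mdeg m (v i) ≠ mdeg m (v j)) :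
    IsGroebnerBasis m (I ⊔ Ideal.span {g}) (G ∪ {p | ∃ i, v i ≠ 0 ∧ p = v i}) := by
  have hspan : Submodule.span K (Set.range v) = Submodule.span K (Set.range h) :=
    span_range_eq_of_lowerTriangular hUtri hUdiag hv
  have hhstd : Submodule.span K (Set.range h) ≤ restrictSupport K {β | IsStdMonomial m I β} :=
    Submodule.span_le.mpr (Set.range_subset_iff.mpr fun i => hred i)
  have hhJ : Submodule.span K (Set.range h) ≤ (I ⊔ Ideal.span {g}).restrictScalars K := by
    refine Submodule.span_le.mpr (Set.range_subset_iff.mpr fun i => ?_)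
    rw [SetLike.mem_coe, Submodule.restrictScalars_mem,
      ← sub_sub_cancel (monomial (α i) 1 * g) (h i)]
    exact Ideal.sub_mem _
      (Ideal.mem_sup_right (Ideal.mul_mem_left _ _ (Ideal.mem_span_singleton_self g)))
      (Ideal.mem_sup_left (hmod i))
  have hJ := restrictScalars_sup_span_singleton_le hG (fun β => (hαrange β).mp) hmod
  refine isGroebnerBasis_of_monomial_degree_mem ?_ fun f hf hf0 => ?_
  · rintro p (hp | ⟨i, hi, rfl⟩)
    · exact ⟨Ideal.mem_sup_left (hG.1 p hp).1, (hG.1 p hp).2⟩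
    · exact ⟨hhJ (hspan ▸ Submodule.subset_span ⟨i, rfl⟩), hi⟩
  obtain ⟨P, hP, w, hw, rfl⟩ := Submodule.mem_sup.mp (hJ hf)
  rcases degree_add_eq_of_mem_of_mem_restrictSupport hP (hhstd hw) hf0 with
    ⟨hP0, hdeg⟩ | ⟨hw0, hdeg⟩
  · rw [hdeg]
    exact Ideal.span_mono (Set.image_mono Set.subset_union_left)
      (hG.2 ▸ Ideal.subset_span ⟨P, ⟨hP, hP0⟩, rfl⟩)
  · obtain ⟨i, hi, hdegi⟩ := exists_degree_eq_of_mem_span m hlead (hspan ▸ hw) hw0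
    rw [hdeg, hdegi]
    exact Ideal.subset_span ⟨v i, Or.inr ⟨i, hi, rfl⟩, rfl⟩

/-- Gao–Guan–Volny: incremental Gröbner bases.  If `G` is a Gröbner basis of `I`,
the standard monomials of `I` are enumerated by `α`, the normal forms of
`x^{α_i}·g` are the `h i`, and downward row operations (encoded by the lower
triangular invertible matrix `U`) transform the system `(x^{α_i})·g ≡ (h_i)` into
`(u_i)·g ≡ (v_i)` where the nonzero `v i` have pairwise distinct leading monomials,
then `G ∪ {v i ≠ 0}` is a Gröbner basis of `(I, g)`. -/
theorem groebner_basis_of_row_reduction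
    {σ K : Type*} [Field K] (m : MonomialOrder σ)
    (I : Ideal (MvPolynomial σ K)) (G : Set (MvPolynomial σ K))
    (hG : IsGroebnerBasis m I G)
    (g : MvPolynomial σ K)
    (α : ℕ → (σ →₀ ℕ))
    (hαinj : Function.Injective α)
    (hαrange : ∀ β, IsStdMonomial m I β ↔ ∃ i, α i = β)
    (h : ℕ → MvPolynomial σ K)
    (hmod : ∀ i, (monomial (α i) (1 : K)) * g - h i ∈ I)
    (hred : ∀ i, ∀ β ∈ (h i).support, IsStdMonomial m I β)
    (U : ℕ → ℕ → K)
    (hUtri : ∀ i j, i < j → U i j = 0)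
    (hUdiag : ∀ i, U i i ≠ 0)
    (u v : ℕ → MvPolynomial σ K)
    (hu : ∀ i, u i = ∑ᶠ j, U i j • (monomial (α j) (1 : K)))
    (hv : ∀ i, v i = ∑ᶠ j, U i j • h j)
    (hlead : ∀ i j, i ≠ j → v i ≠ 0 → v j ≠ 0 → mdeg m (v i) ≠ mdeg m (v j)) :
    IsGroebnerBasis m (I ⊔ Ideal.span {g}) (G ∪ {p | ∃ i, v i ≠ 0 ∧ p = v i}) :=
  groebner_basis_of_row_reduction_general m I G hG g α hαrange h hmod hred U hUtri hUdiag v hv hlead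

end Paper
end
end

section
/- Let I be a homogeneous ideal in S = K[x_1,…,x_n,z], with the graded reverse lexicographic order where z is the smallest variable, such that z is a regular element on S/I. Then the initial ideal in(I) is generated by monomials not divisible by z. -/
open MvPolynomial
open scoped MonomialOrder

noncomputable section
namespace Paper

variable {σ K : Type*} [Field K]

/-!
Since `z` is the smallest variable of a degree-compatible reverse lexicographic order, the
leading monomial of a homogeneous polynomial `f` carries the smallest power `z^k` among all
monomials of `f`, so `f = z^k h` with `in(f) = z^k in(h)` and `z ∤ in(h)`. Homogeneity of `I`
lets us replace any element by the homogeneous component carrying its leading monomial, and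
regularity of `z` gives `h ∈ I`. Hence every generator `in(f)` of `in(I)` is a multiple of
the `z`-free leading monomial `in(h)` of an element of `I`.
-/

theorem mem_of_pow_mul_mem {R : Type*} [CommSemiring R] {I : Ideal R} {a : R}
    (ha : ∀ f, a * f ∈ I → f ∈ I) (k : ℕ) {f : R} (hf : a ^ k * f ∈ I) : f ∈ I := by
  induction k generalizing f with
  | zero => simpa using hf
  | succ k ih => exact ih (ha _ (by rwa [pow_succ', mul_assoc] at hf))

section MvPolynomial

variable {R : Type*} [CommSemiring R]

theorem monomial_one_dvd_of_forall_le {s : σ →₀ ℕ} {f : MvPolynomial σ R}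
    (h : ∀ d ∈ f.support, s ≤ d) : monomial s 1 ∣ f := by
  rw [monomial_one_dvd_iff_modMonomial_eq_zero]
  ext d
  by_cases hs : s ≤ d
  · exact coeff_modMonomial_of_le f hs
  · rw [coeff_modMonomial_of_not_le f hs, coeff_zero, ← notMem_support_iff]
    exact fun hd => hs (h d hd)

theorem degree_mem_support_homogeneousComponent_degree (m : MonomialOrder σ)
    {f : MvPolynomial σ R} (hf : f ≠ 0) :
    m.degree f ∈ (homogeneousComponent (m.degree f).degree f).support := by
  rw [support_homogeneousComponent, Finset.mem_filter]
  exact ⟨m.degree_mem_support hf, rfl⟩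

theorem degree_homogeneousComponent_degree (m : MonomialOrder σ) (f : MvPolynomial σ R) :
    m.degree (homogeneousComponent (m.degree f).degree f) = m.degree f := by
  rcases eq_or_ne f 0 with rfl | hf
  · simp
  have hmem := degree_mem_support_homogeneousComponent_degree m hf
  refine m.toSyn.injective (le_antisymm ?_ (m.le_degree hmem))
  have hlead := m.degree_mem_support (support_nonempty.mp ⟨_, hmem⟩)
  rw [support_homogeneousComponent, Finset.mem_filter] at hlead
  exact m.le_degree hlead.1

end MvPolynomial

attribute [local instance] MvPolynomial.gradedAlgebra in
theorem IsHomogeneousIdeal.homogeneousComponent_mem {I : Ideal (MvPolynomial σ K)}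
    (hI : IsHomogeneousIdeal I) {f : MvPolynomial σ K} (hf : f ∈ I) (d : ℕ) :
    homogeneousComponent d f ∈ I := by
  obtain ⟨S, hS, rfl⟩ := hI
  refine homogeneousComponent_mem_of_mem (Ideal.homogeneous_span _ _ fun x hx => ?_) hf d
  exact (hS x hx).imp fun k hk => (mem_homogeneousSubmodule k x).mpr hk

namespace IsGrevlex

variable {n : ℕ} {m : MonomialOrder (Fin (n+1))} {R : Type*} [CommSemiring R]

theorem degree_last_le (hm : IsGrevlex m) {f : MvPolynomial (Fin (n+1)) R} {d : ℕ}
    (hf : f.IsHomogeneous d) {β : Fin (n+1) →₀ ℕ} (hβ : β ∈ f.support) :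
    m.degree f (Fin.last n) ≤ β (Fin.last n) := by
  by_contra! hlt
  have hf0 : f ≠ 0 := support_nonempty.mp ⟨β, hβ⟩
  have hdeg : (m.degree f).degree = β.degree := by
    rw [Finsupp.degree_eq_weight_one]
    exact (hf (mem_support_iff.mp (m.degree_mem_support hf0))).trans
      (hf (mem_support_iff.mp hβ)).symm
  have hlt' : m.degree f ≺[m] β :=
    (hm _ _).mpr (Or.inr ⟨hdeg, Fin.last n, hlt, fun k hk => absurd hk (Fin.le_last k).not_gt⟩)
  exact hlt'.not_ge (m.le_degree hβ)

theorem X_last_pow_dvd (hm : IsGrevlex m) {f : MvPolynomial (Fin (n+1)) R} {d : ℕ}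
    (hf : f.IsHomogeneous d) : X (Fin.last n) ^ m.degree f (Fin.last n) ∣ f := by
  rw [X_pow_eq_monomial]
  exact monomial_one_dvd_of_forall_le fun β hβ =>
    Finsupp.single_le_iff.mpr (hm.degree_last_le hf hβ)

theorem exists_mem_degree_eq_single_last_add (hm : IsGrevlex m)
    {I : Ideal (MvPolynomial (Fin (n+1)) K)} (hI : IsHomogeneousIdeal I)
    (hreg : ∀ f : MvPolynomial (Fin (n+1)) K, X (Fin.last n) * f ∈ I → f ∈ I)
    {f : MvPolynomial (Fin (n+1)) K} (hfI : f ∈ I) (hf0 : f ≠ 0) :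
    ∃ h ∈ I, h ≠ 0 ∧ m.degree h (Fin.last n) = 0 ∧
      m.degree f = Finsupp.single (Fin.last n) (m.degree f (Fin.last n)) + m.degree h := by
  set k := m.degree f (Fin.last n)
  set g := homogeneousComponent (m.degree f).degree f
  have hgf : m.degree g = m.degree f := degree_homogeneousComponent_degree m f
  have hg0 : g ≠ 0 :=
    support_nonempty.mp ⟨_, degree_mem_support_homogeneousComponent_degree m hf0⟩
  obtain ⟨h, hgh⟩ : X (Fin.last n) ^ k ∣ g := by
    have := hm.X_last_pow_dvd (homogeneousComponent_isHomogeneous (m.degree f).degree f)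
    rwa [hgf] at this
  have hhI : h ∈ I := mem_of_pow_mul_mem hreg k (hgh ▸ hI.homogeneousComponent_mem hfI _)
  have hh0 : h ≠ 0 := by
    rintro rfl
    exact hg0 (by rw [hgh, mul_zero])
  have hdeg : m.degree f = Finsupp.single (Fin.last n) k + m.degree h := by
    classical
    rw [← hgf, hgh, m.degree_mul (pow_ne_zero _ (X_ne_zero _)) hh0, X_pow_eq_monomial,
      m.degree_monomial, if_neg one_ne_zero]
  refine ⟨h, hhI, hh0, ?_, hdeg⟩
  have hlast := congr_arg (· (Fin.last n)) hdeg
  simp only [Finsupp.add_apply, Finsupp.single_eq_same] at hlast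
  omega

end IsGrevlex

/-- If `I ⊂ K[x_1,…,x_n,z]` is homogeneous and `z` (the smallest variable for
grevlex) is regular on `S/I`, then the initial ideal of `I` is generated by
monomials not divisible by `z`. -/
theorem initialIdeal_generated_by_z_free_monomials
    {K : Type*} [Field K] (n : ℕ)
    (m : MonomialOrder (Fin (n+1))) (hm : IsGrevlex m)
    (I : Ideal (MvPolynomial (Fin (n+1)) K)) (hI : IsHomogeneousIdeal I)
    (hreg : ∀ f : MvPolynomial (Fin (n+1)) K, (X (Fin.last n)) * f ∈ I → f ∈ I) :
    ∃ T : Set (Fin (n+1) →₀ ℕ), (∀ γ ∈ T, γ (Fin.last n) = 0) ∧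
      initialIdeal m I = Ideal.span ((fun γ => (monomial γ (1 : K))) '' T) := by
  set T := {γ : Fin (n+1) →₀ ℕ | γ (Fin.last n) = 0 ∧ monomial γ (1 : K) ∈ initialIdeal m I}
  refine ⟨T, fun γ hγ => hγ.1, le_antisymm (Ideal.span_le.mpr ?_) (Ideal.span_le.mpr ?_)⟩
  · rintro _ ⟨f, ⟨hfI, hf0⟩, rfl⟩
    obtain ⟨h, hhI, hh0, hlast, hdeg⟩ := hm.exists_mem_degree_eq_single_last_add hI hreg hfI hf0
    have hhT : m.degree h ∈ T := ⟨hlast, Ideal.subset_span ⟨h, ⟨hhI, hh0⟩, rfl⟩⟩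
    change monomial (m.degree f) (1 : K) ∈ Ideal.span _
    rw [hdeg, monomial_single_add]
    exact Ideal.mul_mem_left _ _ (Ideal.subset_span ⟨_, hhT, rfl⟩)
  · rintro _ ⟨γ, hγ, rfl⟩
    exact hγ.2

end Paper
end
end
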